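/- Let p be an odd prime, r = p^m with m even and m_p := m mod p nonzero. For A ∈ F_p^* and B ∈ F_p, let N(A,B) = #{x ∈ F_r : Tr(x²) = A, Tr(x) = B} and Δ = B² - m_p·A in F_p. Then N(A,B) = p^{m-2} if Δ = 0, and N(A,B) = p^{m-2} + η(Δ)·p^{-1}·G_m if Δ ≠ 0, where η is the quadratic character of F_p and G_m the quadratic Gauss sum over F_r. -/

import Mathlib

/-!
Let `ψ` be a nontrivial additive character of `F_p`. Orthogonality gives
`p² N(A,B) = ∑_{y,z ∈ F_p} ψ(-yA - zB) ∑_{x ∈ F} ψ(Tr(y x² + z x))`.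
The terms with `y = 0` contribute `p^m`. For `y ≠ 0`, the element `y` is a square in `F`
because `m` is even, so completing the square in `F` turns the inner sum into
`ψ(-m z² / 4y) G_m`; completing the square again in `F_p` turns the sum over `z` into
`η(-m y) g ψ(yΔ/m)`, where `g` is the quadratic Gauss sum of `F_p`. Summing over `y` yields a
second factor `η(Δ/m) g`, and `g² = η(-1) p` leaves `p η(Δ) G_m`.
-/

open Finset MulChar Module

section QuadraticGaussSum

variable {K R : Type*} [Field K] [Fintype K] [DecidableEq K] [CommRing R]

theorem quadraticChar_ringHomComp_apply (a : K) :
    (quadraticChar K).ringHomComp (Int.castRingHom R) a =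
      if a = 0 then 0 else if IsSquare a then 1 else -1 := by
  rw [ringHomComp_apply, quadraticChar_apply, quadraticCharFun]
  split_ifs <;> simp

theorem gaussSum_quadraticChar_mulShift (hK : ringChar K ≠ 2) (ψ : AddChar K R) (a : K) :
    gaussSum ((quadraticChar K).ringHomComp (Int.castRingHom R)) (ψ.mulShift a) =
      (quadraticChar K).ringHomComp (Int.castRingHom R) a *
        gaussSum ((quadraticChar K).ringHomComp (Int.castRingHom R)) ψ := by
  rcases eq_or_ne a 0 with rfl | ha
  · simp only [AddChar.mulShift_zero, gaussSum, AddChar.one_apply, mul_one,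
      ringHomComp_apply, ← map_sum, quadraticChar_sum_zero hK, quadraticChar_zero, map_zero,
      zero_mul]
  · rw [← gaussSum_mulShift _ ψ (Units.mk0 a ha), Units.val_mk0, ← mul_assoc, ringHomComp_apply,
      ← map_mul, ← sq, quadraticChar_sq_one ha, map_one, one_mul]

variable [IsDomain R]

theorem sum_addChar_mul_sq (hK : ringChar K ≠ 2) {ψ : AddChar K R} (hψ : ψ ≠ 1) {a : K}
    (ha : a ≠ 0) :
    ∑ x, ψ (a * x ^ 2) = (quadraticChar K).ringHomComp (Int.castRingHom R) a *
      gaussSum ((quadraticChar K).ringHomComp (Int.castRingHom R)) ψ := by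
  set χ := (quadraticChar K).ringHomComp (Int.castRingHom R)
  have card_sqrts (u : K) : (#{x | x ^ 2 = u} : R) = χ u + 1 := by
    have := quadraticChar_card_sqrts hK u
    rw [Set.toFinset_ofPred] at this
    rw [ringHomComp_apply, eq_intCast, ← Int.cast_one, ← Int.cast_add, ← this,
      Int.cast_natCast]
  calc ∑ x, ψ (a * x ^ 2) = ∑ u, (#{x | x ^ 2 = u} : R) * ψ (a * u) := by
        simp_rw [← sum_fiberwise' univ (· ^ 2) (fun u => ψ (a * u)), sum_const, nsmul_eq_mul]
    _ = gaussSum χ (ψ.mulShift a) + ∑ u, ψ.mulShift a u := by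
        simp_rw [gaussSum, AddChar.mulShift_apply, card_sqrts, add_mul, one_mul, sum_add_distrib]
    _ = χ a * gaussSum χ ψ := by
        rw [gaussSum_quadraticChar_mulShift hK, AddChar.sum_eq_zero_of_ne_one
          (AddChar.IsPrimitive.of_ne_one hψ ha), add_zero]

theorem sum_addChar_quadratic (hK : ringChar K ≠ 2) {ψ : AddChar K R} (hψ : ψ ≠ 1) {a : K}
    (ha : a ≠ 0) (b : K) :
    ∑ x, ψ (a * x ^ 2 + b * x) = ψ (-b ^ 2 / (4 * a)) *
      (quadraticChar K).ringHomComp (Int.castRingHom R) a *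
        gaussSum ((quadraticChar K).ringHomComp (Int.castRingHom R)) ψ := by
  have h2 : (2 : K) ≠ 0 := Ring.two_ne_zero hK
  have h4 : (4 : K) ≠ 0 := by simpa [show (4 : K) = 2 * 2 by norm_num] using h2
  have complete_sq (x : K) :
      a * (x - b / (2 * a)) ^ 2 + b * (x - b / (2 * a)) = -b ^ 2 / (4 * a) + a * x ^ 2 := by
    field_simp; ring
  rw [mul_assoc, ← sum_addChar_mul_sq hK hψ ha, mul_sum,
    ← (Equiv.subRight (b / (2 * a))).sum_comp]
  simp only [Equiv.subRight_apply, complete_sq, AddChar.map_add_eq_mul]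

end QuadraticGaussSum

theorem card_filter_eq_and_eq {K R X : Type*} [Field K] [Fintype K] [DecidableEq K]
    [CommRing R] [IsDomain R] [Fintype X] {ψ : AddChar K R} (hψ : ψ ≠ 1) (f g : X → K) (a b : K) :
    (Fintype.card K : R) ^ 2 * #{x | f x = a ∧ g x = b} =
      ∑ y, ∑ z, ψ (-(y * a) - z * b) * ∑ x, ψ (y * f x + z * g x) := by
  have hψ' := AddChar.IsPrimitive.of_ne_one hψ
  calc (Fintype.card K : R) ^ 2 * #{x | f x = a ∧ g x = b}
      = ∑ x, (∑ y, ψ (y * (f x - a))) * ∑ z, ψ (z * (g x - b)) := by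
        simp_rw [AddChar.sum_mulShift _ hψ', sub_eq_zero, natCast_card_filter, mul_sum]
        refine sum_congr rfl fun x _ => ?_
        split_ifs <;> simp_all [sq]
    _ = _ := by
        simp_rw [sum_mul_sum, mul_sum, ← AddChar.map_add_eq_mul]
        rw [sum_comm]
        refine sum_congr rfl fun y _ => ?_
        rw [sum_comm]
        refine sum_congr rfl fun z _ => sum_congr rfl fun x _ => congrArg ψ (by ring)

theorem isSquare_algebraMap_of_even_finrank {K F : Type*} [Field K] [Fintype K] [Field F]
    [Fintype F] [Algebra K F] (hF : ringChar F ≠ 2) (h : Even (finrank K F)) (a : K) :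
    IsSquare (algebraMap K F a) := by
  rcases eq_or_ne a 0 with rfl | ha
  · simp
  rw [FiniteField.isSquare_iff hF ((map_ne_zero _).mpr ha)]
  set q := Fintype.card K
  obtain ⟨j, hj⟩ : Odd q := Nat.odd_iff.mpr
    (FiniteField.odd_card_of_char_ne_two ((Algebra.ringChar_eq K F).trans_ne hF))
  obtain ⟨k, hk⟩ := h
  have hq2 : (q - 1) * 2 ∣ q ^ 2 - 1 :=
    ⟨j + 1, by rw [hj, Nat.add_sub_cancel]; exact Nat.sub_eq_of_eq_add (by ring)⟩
  have hqF : (q - 1) * 2 ∣ Fintype.card F - 1 := by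
    rw [card_eq_pow_finrank (K := K), hk, ← two_mul, pow_mul]
    exact hq2.trans (Nat.sub_one_dvd_pow_sub_one _ k)
  obtain ⟨e, he⟩ := hqF
  rw [mul_right_comm] at he
  have hodd := FiniteField.odd_card_of_char_ne_two hF
  rw [show Fintype.card F / 2 = (q - 1) * e by omega, pow_mul, ← map_pow,
    FiniteField.pow_card_sub_one_eq_one a ha, map_one, one_pow]

section Trace

variable {K F : Type*} [Field K] [Field F] [Algebra K F]

variable (F) in
noncomputable def traceChar (ψ : AddChar K ℂ) : AddChar F ℂ :=
  ψ.compAddMonoidHom (Algebra.trace K F).toAddMonoidHom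

@[simp]
theorem traceChar_apply (ψ : AddChar K ℂ) (x : F) :
    traceChar F ψ x = ψ (Algebra.trace K F x) := rfl

theorem traceChar_ne_one [Finite F] {ψ : AddChar K ℂ} (hψ : ψ ≠ 1) : traceChar F ψ ≠ 1 := by
  obtain ⟨a, ha⟩ := AddChar.ne_one_iff.mp hψ
  obtain ⟨x, rfl⟩ := Algebra.trace_surjective K F a
  exact AddChar.ne_one_iff.mpr ⟨x, ha⟩

theorem sum_addChar_mul_trace [Fintype F] [DecidableEq K] [DecidableEq F] {ψ : AddChar K ℂ}
    (hψ : ψ ≠ 1) (z : K) :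
    ∑ x : F, ψ (z * Algebra.trace K F x) = if z = 0 then (Fintype.card F : ℂ) else 0 := by
  have h := AddChar.sum_mulShift (algebraMap K F z)
    (AddChar.IsPrimitive.of_ne_one (traceChar_ne_one (F := F) hψ))
  simp only [map_eq_zero_iff _ (algebraMap K F).injective, traceChar_apply, Nat.cast_ite,
    Nat.cast_zero] at h
  rw [← h]
  refine sum_congr rfl fun x _ => ?_
  rw [← Algebra.commutes, ← Algebra.smul_def, map_smul, smul_eq_mul]

theorem sum_addChar_trace_quadratic [Fintype K] [Fintype F] [DecidableEq K] [DecidableEq F]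
    (hK : ringChar K ≠ 2) {ψ : AddChar K ℂ} (hψ : ψ ≠ 1) (heven : Even (finrank K F)) {y : K}
    (hy : y ≠ 0) (z : K) :
    ∑ x : F, ψ (y * Algebra.trace K F (x ^ 2) + z * Algebra.trace K F x) =
      ψ (finrank K F * (-z ^ 2 / (4 * y))) *
        gaussSum ((quadraticChar F).ringHomComp (Int.castRingHom ℂ)) (traceChar F ψ) := by
  have hF : ringChar F ≠ 2 := (Algebra.ringChar_eq K F).symm.trans_ne hK
  have hy' : algebraMap K F y ≠ 0 := (map_ne_zero _).mpr hy
  have trace_smul (c : K) (u : F) : Algebra.trace K F (algebraMap K F c * u) =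
      c * Algebra.trace K F u := by
    rw [← Algebra.smul_def, map_smul, smul_eq_mul]
  calc ∑ x : F, ψ (y * Algebra.trace K F (x ^ 2) + z * Algebra.trace K F x)
      = ∑ x : F, traceChar F ψ (algebraMap K F y * x ^ 2 + algebraMap K F z * x) := by
        simp only [traceChar_apply, map_add, trace_smul]
    _ = _ := by
        rw [sum_addChar_quadratic hF (traceChar_ne_one hψ) hy', ringHomComp_apply,
          (quadraticChar_one_iff_isSquare hy').mpr
            (isSquare_algebraMap_of_even_finrank hF heven y),
          map_one, mul_one, traceChar_apply, ← map_pow, ← map_neg, ← map_ofNat (algebraMap K F),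
          ← map_mul, ← map_div₀, Algebra.trace_algebraMap, nsmul_eq_mul]

theorem sum_addChar_mul_sum_addChar_trace [Fintype K] [Fintype F] [DecidableEq K]
    [DecidableEq F] (hK : ringChar K ≠ 2) {ψ : AddChar K ℂ} (hψ : ψ ≠ 1)
    (heven : Even (finrank K F)) (hm : (finrank K F : K) ≠ 0) (A B : K) {y : K} (hy : y ≠ 0) :
    ∑ z, ψ (-(y * A) - z * B) *
        ∑ x : F, ψ (y * Algebra.trace K F (x ^ 2) + z * Algebra.trace K F x) =
      gaussSum ((quadraticChar F).ringHomComp (Int.castRingHom ℂ)) (traceChar F ψ) *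
        gaussSum ((quadraticChar K).ringHomComp (Int.castRingHom ℂ)) ψ *
          (quadraticChar K).ringHomComp (Int.castRingHom ℂ) (-finrank K F) *
            ((quadraticChar K).ringHomComp (Int.castRingHom ℂ) y *
              ψ ((B ^ 2 - finrank K F * A) / finrank K F * y)) := by
  set m : K := (finrank K F : K)
  set χ := (quadraticChar K).ringHomComp (Int.castRingHom ℂ)
  set G := gaussSum ((quadraticChar F).ringHomComp (Int.castRingHom ℂ)) (traceChar F ψ)
  have h2 : (2 : K) ≠ 0 := Ring.two_ne_zero hK
  have h4 : (4 : K) ≠ 0 := by simpa [show (4 : K) = 2 * 2 by norm_num] using h2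
  have hc : -m / (4 * y) ≠ 0 := div_ne_zero (neg_ne_zero.mpr hm) (mul_ne_zero h4 hy)
  have hχc : χ (-m / (4 * y)) = χ (-m) * χ y := by
    rw [show -m / (4 * y) = -m * y * ((2 * y)⁻¹) ^ 2 by field_simp; ring]
    simp only [χ, ringHomComp_apply, map_mul,
      quadraticChar_sq_one' (inv_ne_zero (mul_ne_zero h2 hy)), map_one, mul_one]
  have hexp : -(y * A) + -(-B) ^ 2 / (4 * (-m / (4 * y))) = (B ^ 2 - m * A) / m * y := by
    field_simp; ring
  simp_rw [sum_addChar_trace_quadratic hK hψ heven hy]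
  calc ∑ z, ψ (-(y * A) - z * B) * (ψ (m * (-z ^ 2 / (4 * y))) * G)
      = G * ψ (-(y * A)) * ∑ z, ψ (-m / (4 * y) * z ^ 2 + -B * z) := by
        rw [mul_sum]
        refine sum_congr rfl fun z _ => ?_
        rw [← mul_assoc, ← AddChar.map_add_eq_mul, mul_assoc G, ← AddChar.map_add_eq_mul,
          mul_comm]
        congr 2
        field_simp
        ring
    _ = _ := by
        rw [sum_addChar_quadratic hK hψ hc, hχc, ← hexp, AddChar.map_add_eq_mul]
        ring

theorem card_trace_sq_eq_and_trace_eq [Fintype K] [Fintype F] [DecidableEq K] [DecidableEq F]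
    (hK : ringChar K ≠ 2) {ψ : AddChar K ℂ} (hψ : ψ ≠ 1) (heven : Even (finrank K F))
    (hm : (finrank K F : K) ≠ 0) (A B : K) :
    (Fintype.card K : ℂ) ^ 2 *
        #{x : F | Algebra.trace K F (x ^ 2) = A ∧ Algebra.trace K F x = B} =
      Fintype.card F + Fintype.card K *
        (quadraticChar K).ringHomComp (Int.castRingHom ℂ) (B ^ 2 - finrank K F * A) *
          gaussSum ((quadraticChar F).ringHomComp (Int.castRingHom ℂ)) (traceChar F ψ) := by
  have zero_term : ∑ z, ψ (-(0 * A) - z * B) * ∑ x : F,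
      ψ (0 * Algebra.trace K F (x ^ 2) + z * Algebra.trace K F x) = Fintype.card F := by
    simp [sum_addChar_mul_trace hψ]
  rw [card_filter_eq_and_eq hψ, ← add_sum_erase _ _ (mem_univ 0), zero_term,
    sum_congr rfl fun y hy =>
      sum_addChar_mul_sum_addChar_trace hK hψ heven hm A B (ne_of_mem_erase hy),
    sum_erase _ (by simp), ← mul_sum]
  set m : K := (finrank K F : K)
  set χ := (quadraticChar K).ringHomComp (Int.castRingHom ℂ)
  set G := gaussSum ((quadraticChar F).ringHomComp (Int.castRingHom ℂ)) (traceChar F ψ)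
  have hg : gaussSum χ ψ ^ 2 = χ (-1) * Fintype.card K :=
    gaussSum_sq ((ringHomComp_ne_one_iff Int.cast_injective).mpr (quadraticChar_ne_one hK))
      ((quadraticChar_isQuadratic K).comp _) (AddChar.IsPrimitive.of_ne_one hψ)
  have gauss_shift :
      ∑ y, χ y * ψ ((B ^ 2 - m * A) / m * y) = χ ((B ^ 2 - m * A) / m) * gaussSum χ ψ :=
    gaussSum_quadraticChar_mulShift hK ψ _
  have hΔ : χ (B ^ 2 - m * A) = χ (-1) * χ (-m) * χ ((B ^ 2 - m * A) / m) := by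
    rw [← map_mul, ← map_mul]
    congr 1
    field_simp
  rw [gauss_shift, hΔ]
  linear_combination G * χ (-m) * χ ((B ^ 2 - m * A) / m) * hg

end Trace

theorem stmt11_general (p m : ℕ) [Fact p.Prime] (hodd : p ≠ 2) (hme : Even m)
    (hmp : ¬ p ∣ m)
    (F : Type) [Field F] [Fintype F] [DecidableEq F] [Algebra (ZMod p) F]
    (hcard : Fintype.card F = p ^ m)
    (ζ : ℂ) (hζ : IsPrimitiveRoot ζ p)
    (ηm : F → ℂ)
    (hηm : ∀ a : F, ηm a = if a = 0 then 0 else if IsSquare a then 1 else -1)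
    (η : ZMod p → ℂ)
    (hη : ∀ a : ZMod p, η a = if a = 0 then 0 else if IsSquare a then 1 else -1)
    (Gm : ℂ)
    (hGm : Gm = ∑ x ∈ Finset.univ.filter (fun x : F => x ≠ 0),
        ηm x * ζ ^ (Algebra.trace (ZMod p) F x).val)
    (A B : ZMod p) :
    (B ^ 2 - (m : ZMod p) * A = 0 →
      ((Finset.univ.filter (fun x : F =>
          Algebra.trace (ZMod p) F (x ^ 2) = A ∧ Algebra.trace (ZMod p) F x = B)).card : ℂ)
        = (p : ℂ) ^ (m - 2)) ∧
    (B ^ 2 - (m : ZMod p) * A ≠ 0 →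
      ((Finset.univ.filter (fun x : F =>
          Algebra.trace (ZMod p) F (x ^ 2) = A ∧ Algebra.trace (ZMod p) F x = B)).card : ℂ)
        = (p : ℂ) ^ (m - 2) + η (B ^ 2 - (m : ZMod p) * A) * (p : ℂ)⁻¹ * Gm) := by
  have hp : p.Prime := Fact.out
  have hrank : finrank (ZMod p) F = m := by
    have h := card_eq_pow_finrank (K := ZMod p) (V := F)
    rw [ZMod.card, hcard] at h
    exact Nat.pow_right_injective hp.two_le h.symm
  set ψ := AddChar.zmodChar p hζ.pow_eq_one
  have hψ : ψ ≠ 1 := (AddChar.zmod_char_ne_one_iff p ψ).mpr <| by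
    rw [← Nat.cast_one, AddChar.zmodChar_apply', pow_one]
    exact hζ.ne_one hp.one_lt
  have hη' : η = (quadraticChar (ZMod p)).ringHomComp (Int.castRingHom ℂ) :=
    funext fun a => (hη a).trans (quadraticChar_ringHomComp_apply a).symm
  have hGm' :
      Gm = gaussSum ((quadraticChar F).ringHomComp (Int.castRingHom ℂ)) (traceChar F ψ) := by
    rw [hGm, gaussSum, sum_filter_of_ne fun x _ hx => by rintro rfl; simp [hηm] at hx]
    exact sum_congr rfl fun x _ => by rw [hηm, quadraticChar_ringHomComp_apply]; rfl
  have hcount := card_trace_sq_eq_and_trace_eq (F := F)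
    ((ZMod.ringChar_zmod_n p).trans_ne hodd) hψ (hrank ▸ hme)
    (by rwa [hrank, Ne, ZMod.natCast_eq_zero_iff]) A B
  rw [hrank, ZMod.card, hcard, ← hη', ← hGm'] at hcount
  have hm2 : 2 ≤ m := by
    obtain ⟨k, rfl⟩ := hme
    have : k ≠ 0 := by rintro rfl; exact hmp (dvd_zero p)
    omega
  have hN :
      (#{x : F | Algebra.trace (ZMod p) F (x ^ 2) = A ∧ Algebra.trace (ZMod p) F x = B} : ℂ) =
        (p : ℂ) ^ (m - 2) + η (B ^ 2 - (m : ZMod p) * A) * (p : ℂ)⁻¹ * Gm := by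
    have hp0 : (p : ℂ) ≠ 0 := by exact_mod_cast hp.ne_zero
    have hpm : (p : ℂ) ^ m = p ^ 2 * p ^ (m - 2) := by rw [← pow_add, Nat.add_sub_cancel' hm2]
    apply mul_left_cancel₀ (pow_ne_zero 2 hp0)
    rw [hcount, Nat.cast_pow, hpm]
    field_simp
  exact ⟨fun hΔ => by rw [hN, hΔ, hη, if_pos rfl]; ring, fun _ => hN⟩

/-- For `m` even with `p ∤ m`, `A ∈ F_p^*`, `B ∈ F_p`, `Δ = B² - m_p·A`:
`N(A,B) = p^{m-2}` if `Δ = 0`, and `N(A,B) = p^{m-2} + η(Δ)p⁻¹G_m` if `Δ ≠ 0`. -/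
theorem stmt11 (p m : ℕ) [Fact p.Prime] (hodd : p ≠ 2) (hm : 2 < m) (hme : Even m)
    (hmp : ¬ p ∣ m)
    (F : Type) [Field F] [Fintype F] [DecidableEq F] [Algebra (ZMod p) F]
    (hcard : Fintype.card F = p ^ m)
    (ζ : ℂ) (hζ : IsPrimitiveRoot ζ p)
    (ηm : F → ℂ)
    (hηm : ∀ a : F, ηm a = if a = 0 then 0 else if IsSquare a then 1 else -1)
    (η : ZMod p → ℂ)
    (hη : ∀ a : ZMod p, η a = if a = 0 then 0 else if IsSquare a then 1 else -1)
    (Gm : ℂ)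
    (hGm : Gm = ∑ x ∈ Finset.univ.filter (fun x : F => x ≠ 0),
        ηm x * ζ ^ (Algebra.trace (ZMod p) F x).val)
    (A B : ZMod p) (hA : A ≠ 0) :
    (B ^ 2 - (m : ZMod p) * A = 0 →
      ((Finset.univ.filter (fun x : F =>
          Algebra.trace (ZMod p) F (x ^ 2) = A ∧ Algebra.trace (ZMod p) F x = B)).card : ℂ)
        = (p : ℂ) ^ (m - 2)) ∧
    (B ^ 2 - (m : ZMod p) * A ≠ 0 →
      ((Finset.univ.filter (fun x : F =>
          Algebra.trace (ZMod p) F (x ^ 2) = A ∧ Algebra.trace (ZMod p) F x = B)).card : ℂ)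
        = (p : ℂ) ^ (m - 2) + η (B ^ 2 - (m : ZMod p) * A) * (p : ℂ)⁻¹ * Gm) :=
  stmt11_general p m hodd hme hmp F hcard ζ hζ ηm hηm η hη Gm hGm A B
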